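/- arXiv:2510.07617 — 3 statements merged into one kernel-verified Lean document; each statement's English description precedes it below -/
import Mathlib

section
/- Let X be a set, T an overlap-free subset of ⟨X⟩\{1}, and suppose some w ∈ T has length greater than 1, say w = w₁·w₂ with w₁, w₂ nonidentity elements of ⟨X⟩. In ⟨X : i(T)⟩ set x = (image of w₁) and y = (image of w₂)·i(w). Then x·y = 1 but y·x ≠ 1; moreover the elements yᵐ·xⁿ for m, n ≥ 0 are pairwise distinct (so x and y generate a bicyclic submonoid of ⟨X : i(T)⟩), and in particular y·x is a nonidentity idempotent element. -/
namespace AdjoinInverses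

variable {X : Type*}

/-- The embedding of the free monoid on `X` into the free monoid on `X ⊕ S`. -/
def emb (S : Set (FreeMonoid X)) : FreeMonoid X →* FreeMonoid (X ⊕ S) :=
  FreeMonoid.map Sum.inl

/-- The generator `i(w)` corresponding to `w ∈ S`. -/
def igen (S : Set (FreeMonoid X)) (w : S) : FreeMonoid (X ⊕ S) :=
  FreeMonoid.of (Sum.inr w)

/-- The defining relations `w ⬝ i(w) = 1` and `i(w) ⬝ w = 1` for `w ∈ S`. -/
inductive InvRel (S : Set (FreeMonoid X)) : FreeMonoid (X ⊕ S) → FreeMonoid (X ⊕ S) → Prop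
  | mul_inv (w : S) : InvRel S (emb S w.1 * igen S w) 1
  | inv_mul (w : S) : InvRel S (igen S w * emb S w.1) 1

/-- The congruence generated by the defining relations. -/
def invCon (S : Set (FreeMonoid X)) : Con (FreeMonoid (X ⊕ S)) := conGen (InvRel S)

/-- The monoid `⟨X : i(S)⟩` obtained from the free monoid on `X` by universally
adjoining a two-sided inverse to each element of `S`. -/
def AdjInv (S : Set (FreeMonoid X)) : Type _ := (invCon S).Quotient

instance (S : Set (FreeMonoid X)) : Monoid (AdjInv S) := Con.monoid _

/-- The natural homomorphism `⟨X⟩ → ⟨X : i(S)⟩`. -/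
def natHom (S : Set (FreeMonoid X)) : FreeMonoid X →* AdjInv S :=
  ((invCon S).mk').comp (emb S)

/-- The adjoined inverse `i(w)`, as an element of `⟨X : i(S)⟩`. -/
def invElt (S : Set (FreeMonoid X)) (w : S) : AdjInv S :=
  (invCon S).mk' (igen S w)

/-- `S` and `S'` are inverse-equivalent: each element of `S'` becomes invertible in
`⟨X : i(S)⟩` and each element of `S` becomes invertible in `⟨X : i(S')⟩`. -/
def InvEquiv (S S' : Set (FreeMonoid X)) : Prop :=
  (∀ w ∈ S', IsUnit (natHom S w)) ∧ ∀ w ∈ S, IsUnit (natHom S' w)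

/-- Two (nonidentity) elements of the free monoid overlap: one can be written `a*b`
and the other `b*c` with `b ≠ 1` and at most one of `a`, `c` equal to `1`. -/
def Overlap (u v : FreeMonoid X) : Prop :=
  ∃ a b c : FreeMonoid X, b ≠ 1 ∧ (a ≠ 1 ∨ c ≠ 1) ∧ u = a * b ∧ v = b * c

/-- A set `T` is overlap-free if no pair of elements of `T` (distinct or not) overlap. -/
def OverlapFree (T : Set (FreeMonoid X)) : Prop :=
  ∀ u ∈ T, ∀ v ∈ T, ¬ Overlap u v

end AdjoinInverses

/-!
Orient the defining relations as deletions of the factors `w i(w)` and `i(w) w` (`w ∈ T`) from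
words over `X ⊕ T`. Each such factor contains exactly one letter of the form `i(·)`. Two
overlapping occurrences either share that letter, and then deleting either one gives the same
word, or they overlap in letters of `X` only, which overlap-freeness allows only as `i(v) v i(v)`,
where again both deletions agree. So the rewriting is locally confluent, and two words that are
equal in `⟨X : i(T)⟩` have a common reduct. A deletion removes exactly one letter `i(·)`, so
`w₂ i(w) w₁`, which is not itself a deletable factor, does not reduce to the empty word:
`y x ≠ 1`. Together with `x y = 1` this makes `⟨x, y⟩` bicyclic.
-/

section Bicyclic

variable {M : Type*} [Monoid M] {x y : M}

theorem eq_zero_of_pow_mul_pow_eq_one (hxy : x * y = 1) (hyx : y * x ≠ 1) {a b : ℕ}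
    (h : y ^ a * x ^ b = 1) : a = 0 ∧ b = 0 := by
  -- a nonzero exponent gives `y` a right inverse or `x` a left inverse, forcing `y * x = 1`
  constructor
  · obtain _ | a := a
    · rfl
    rw [pow_succ', mul_assoc] at h
    exact absurd (left_inv_eq_right_inv hxy h ▸ h) hyx
  · obtain _ | b := b
    · rfl
    rw [pow_succ, ← mul_assoc] at h
    exact absurd (left_inv_eq_right_inv h hxy ▸ h) hyx

theorem injective_pow_mul_pow_of_mul_eq_one (hxy : x * y = 1) (hyx : y * x ≠ 1) :
    Function.Injective fun p : ℕ × ℕ => y ^ p.1 * x ^ p.2 := by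
  rintro ⟨m, n⟩ ⟨m', n'⟩ (h : y ^ m * x ^ n = y ^ m' * x ^ n')
  have cancel_left {a b : M} (i : ℕ) (h : y ^ i * a = y ^ i * b) : a = b := by
    simpa [← mul_assoc, pow_mul_pow_eq_one i hxy] using congrArg (x ^ i * ·) h
  have cancel_right {a b : M} (i : ℕ) (h : a * x ^ i = b * x ^ i) : a = b := by
    simpa [mul_assoc, pow_mul_pow_eq_one i hxy] using congrArg (· * y ^ i) h
  wlog hm : m ≤ m' generalizing m n m' n'
  · exact (this m' n' m n h.symm (by omega)).symm
  obtain ⟨k, rfl⟩ := Nat.exists_eq_add_of_le hm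
  have hx : x ^ n = y ^ k * x ^ n' := cancel_left m (by rw [h, pow_add, mul_assoc])
  rcases le_total n n' with hn | hn
  · obtain ⟨j, rfl⟩ := Nat.exists_eq_add_of_le hn
    have : y ^ k * x ^ j = 1 :=
      (cancel_right n (by rw [one_mul, mul_assoc, ← pow_add, add_comm, hx])).symm
    have := eq_zero_of_pow_mul_pow_eq_one hxy hyx this
    simp only [Prod.mk.injEq]
    omega
  · obtain ⟨j, rfl⟩ := Nat.exists_eq_add_of_le hn
    have hj : x ^ j = y ^ k := cancel_right n' (by rw [← pow_add, add_comm, hx])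
    have : y ^ 0 * x ^ (k + j) = 1 := by
      rw [pow_zero, one_mul, pow_add, hj, pow_mul_pow_eq_one k hxy]
    have := eq_zero_of_pow_mul_pow_eq_one hxy hyx this
    simp only [Prod.mk.injEq]
    omega

end Bicyclic

namespace AdjoinInverses

open Relation

variable {X : Type*} {T : Set (FreeMonoid X)}

theorem OverlapFree.eq_nil_of_toList_eq_append (hT : OverlapFree T) {v v' : T} {a b c : List X}
    (hb : b ≠ []) (hv : v.1.toList = a ++ b) (hv' : v'.1.toList = b ++ c) : a = [] ∧ c = [] := by
  by_contra hac
  refine hT v v.2 v' v'.2 ⟨.ofList a, .ofList b, .ofList c, hb, ?_, ?_, ?_⟩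
  · exact not_and_or.mp hac
  · exact FreeMonoid.toList.injective (by simpa)
  · exact FreeMonoid.toList.injective (by simpa)

def IsRedex (T : Set (FreeMonoid X)) (s : List (X ⊕ T)) : Prop :=
  ∃ v : T, s = v.1.toList.map Sum.inl ++ [Sum.inr v] ∨ s = Sum.inr v :: v.1.toList.map Sum.inl

theorem IsRedex.exists_inr_mem {s : List (X ⊕ T)} (hs : IsRedex T s) : ∃ v, Sum.inr v ∈ s := by
  obtain ⟨v, rfl | rfl⟩ := hs <;> exact ⟨v, by simp⟩

theorem IsRedex.split_at_inr {s p q : List (X ⊕ T)} {z : T} (hs : IsRedex T s)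
    (h : s = p ++ Sum.inr z :: q) :
    p = z.1.toList.map Sum.inl ∧ q = [] ∨ p = [] ∧ q = z.1.toList.map Sum.inl := by
  obtain ⟨v, rfl | rfl⟩ := hs
  · obtain ⟨rfl, ⟨⟩, rfl⟩ := (List.append_cons_inj_of_notMem (by simp) (by simp)).mp h
    simp
  · obtain ⟨rfl, ⟨⟩, rfl⟩ := (List.append_cons_inj_of_notMem (x₁ := []) (by simp) (by simp)).mp h
    simp

theorem IsRedex.eq_nil_of_infix {s t c : List (X ⊕ T)} (hs : IsRedex T (t ++ s ++ c))
    (hs' : IsRedex T s) : t = [] ∧ c = [] := by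
  obtain ⟨v, hv⟩ := hs'.exists_inr_mem
  obtain ⟨p, q, rfl⟩ := List.append_of_mem hv
  have := hs.split_at_inr (p := t ++ p) (q := q ++ c) (z := v) (by simp)
  rcases hs'.split_at_inr rfl with ⟨rfl, rfl⟩ | ⟨rfl, rfl⟩ <;> aesop

theorem IsRedex.eq_of_overlap (hT : OverlapFree T) {t u c : List (X ⊕ T)}
    (hs : IsRedex T (t ++ u)) (hs' : IsRedex T (u ++ c)) (hu : u ≠ []) : t = c := by
  obtain ⟨v, hv⟩ := hs.exists_inr_mem
  rcases List.mem_append.mp hv with hvt | hvu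
  · -- the overlap `u` consists of letters of `X`: the redexes are `i(v) v` and `v' i(v')`
    obtain ⟨t₁, t₂, rfl⟩ := List.append_of_mem hvt
    obtain ⟨rfl, ht₂⟩ : t₁ = [] ∧ t₂ ++ u = v.1.toList.map Sum.inl := by
      have := hs.split_at_inr (p := t₁) (q := t₂ ++ u) (z := v) (by simp)
      simp_all
    obtain ⟨a, b, hab, rfl, rfl⟩ := List.map_eq_append_iff.mp ht₂.symm
    obtain ⟨v', hv'⟩ := hs'.exists_inr_mem
    obtain ⟨c₁, c₂, rfl⟩ := List.append_of_mem (by simpa using hv' : Sum.inr v' ∈ c)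
    obtain ⟨hc₁, rfl⟩ : b.map Sum.inl ++ c₁ = v'.1.toList.map Sum.inl ∧ c₂ = [] := by
      have := hs'.split_at_inr (p := b.map Sum.inl ++ c₁) (q := c₂) (z := v') (by simp)
      simp_all
    obtain ⟨b', d, hbd, hb', rfl⟩ := List.map_eq_append_iff.mp hc₁.symm
    obtain rfl := List.map_injective_iff.mpr Sum.inl_injective hb'
    obtain ⟨rfl, rfl⟩ := hT.eq_nil_of_toList_eq_append (by simpa using hu) hab hbd
    obtain rfl : v = v' := Subtype.ext (FreeMonoid.toList.injective (by simp [hab, hbd]))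
    simp
  · obtain ⟨u₁, u₂, rfl⟩ := List.append_of_mem hvu
    have := hs.split_at_inr (p := t ++ u₁) (q := u₂) (z := v) (by simp)
    rcases hs'.split_at_inr (p := u₁) (q := u₂ ++ c) (z := v) (by simp) with
      ⟨rfl, h⟩ | ⟨rfl, h⟩ <;> aesop

def Step (T : Set (FreeMonoid X)) (u u' : List (X ⊕ T)) : Prop :=
  ∃ l s r, IsRedex T s ∧ u = l ++ s ++ r ∧ u' = l ++ r

theorem Step.append_left {u u' : List (X ⊕ T)} (p : List (X ⊕ T)) (h : Step T u u') :
    Step T (p ++ u) (p ++ u') := by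
  obtain ⟨l, s, r, hs, rfl, rfl⟩ := h
  exact ⟨p ++ l, s, r, hs, by simp, by simp⟩

theorem Step.append_right {u u' : List (X ⊕ T)} (p : List (X ⊕ T)) (h : Step T u u') :
    Step T (u ++ p) (u' ++ p) := by
  obtain ⟨l, s, r, hs, rfl, rfl⟩ := h
  exact ⟨l, s, r ++ p, hs, by simp, by simp⟩

theorem reflGen_step_append_left {u u' : List (X ⊕ T)} (p : List (X ⊕ T))
    (h : ReflGen (Step T) u u') : ReflGen (Step T) (p ++ u) (p ++ u') := by
  rcases h with _ | h
  exacts [.refl, .single (h.append_left p)]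

theorem reflTransGen_step_append {a b c d : List (X ⊕ T)} (hab : ReflTransGen (Step T) a b)
    (hcd : ReflTransGen (Step T) c d) : ReflTransGen (Step T) (a ++ c) (b ++ d) :=
  (ReflTransGen.lift (· ++ c) (fun _ _ h => h.append_right c) _ _ hab).trans
    (ReflTransGen.lift (b ++ ·) (fun _ _ h => h.append_left b) _ _ hcd)

theorem exists_reflGen_step_of_append_eq (hT : OverlapFree T) {s₁ s₂ r₁ r₂ t : List (X ⊕ T)}
    (hs₁ : IsRedex T s₁) (hs₂ : IsRedex T s₂) (h : s₁ ++ r₁ = t ++ (s₂ ++ r₂)) :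
    ∃ d, ReflGen (Step T) r₁ d ∧ ReflGen (Step T) (t ++ r₂) d := by
  rcases List.append_eq_append_iff.mp h with ⟨m, rfl, rfl⟩ | ⟨u, rfl, h'⟩
  · exact ⟨m ++ r₂, .single ⟨m, s₂, r₂, hs₂, by simp, rfl⟩,
      .single ⟨[], s₁, m ++ r₂, hs₁, by simp, rfl⟩⟩
  rcases List.append_eq_append_iff.mp h' with ⟨a, rfl, rfl⟩ | ⟨c, rfl, rfl⟩
  · obtain ⟨rfl, rfl⟩ := IsRedex.eq_nil_of_infix (by rwa [List.append_assoc]) hs₂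
    exact ⟨r₁, .refl, by simpa using .refl⟩
  rcases eq_or_ne u [] with rfl | hu
  · exact ⟨r₂, .single ⟨[], c, r₂, by simpa using hs₂, by simp, rfl⟩,
      .single ⟨[], t, r₂, by simpa using hs₁, by simp, rfl⟩⟩
  · obtain rfl := hs₁.eq_of_overlap hT hs₂ hu
    exact ⟨t ++ r₂, .refl, .refl⟩

theorem Step.exists_common_reflGen (hT : OverlapFree T) {u b c : List (X ⊕ T)} (hb : Step T u b)
    (hc : Step T u c) : ∃ d, ReflGen (Step T) b d ∧ ReflGen (Step T) c d := by
  obtain ⟨l₁, s₁, r₁, hs₁, rfl, rfl⟩ := hb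
  obtain ⟨l₂, s₂, r₂, hs₂, hu, rfl⟩ := hc
  rcases List.append_eq_append_iff.mp (by simpa using hu : l₁ ++ (s₁ ++ r₁) = l₂ ++ (s₂ ++ r₂))
    with ⟨t, rfl, h⟩ | ⟨t, rfl, h⟩
  · obtain ⟨d, hb, hc⟩ := exists_reflGen_step_of_append_eq hT hs₁ hs₂ h
    exact ⟨l₁ ++ d, reflGen_step_append_left l₁ hb,
      by simpa using reflGen_step_append_left l₁ hc⟩
  · obtain ⟨d, hc, hb⟩ := exists_reflGen_step_of_append_eq hT hs₂ hs₁ h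
    exact ⟨l₂ ++ d, by simpa using reflGen_step_append_left l₂ hb,
      reflGen_step_append_left l₂ hc⟩

theorem equivalence_join_step (hT : OverlapFree T) :
    Equivalence (Join (ReflTransGen (Step T))) :=
  equivalence_join_reflTransGen fun _ _ _ hb hc =>
    let ⟨d, hbd, hcd⟩ := hb.exists_common_reflGen hT hc
    ⟨d, hbd, hcd.to_reflTransGen⟩

def joinCon (hT : OverlapFree T) : Con (FreeMonoid (X ⊕ T)) where
  r a b := Join (ReflTransGen (Step T)) a.toList b.toList
  iseqv := ⟨fun _ => (equivalence_join_step hT).refl _, (equivalence_join_step hT).symm,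
    (equivalence_join_step hT).trans⟩
  mul' := fun ⟨d, had, hbd⟩ ⟨e, hce, hfe⟩ =>
    ⟨d ++ e, by simpa using reflTransGen_step_append had hce,
      by simpa using reflTransGen_step_append hbd hfe⟩

theorem join_of_invCon (hT : OverlapFree T) {a b : FreeMonoid (X ⊕ T)} (h : invCon T a b) :
    Join (ReflTransGen (Step T)) a.toList b.toList := by
  refine (Con.conGen_le (c := joinCon hT)).mpr (fun a b hab => ⟨b.toList, .single ?_, .refl⟩) h
  rcases hab with v | v
  · exact ⟨[], _, [], ⟨v, .inl rfl⟩, by simp [emb, igen], by simp⟩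
  · exact ⟨[], _, [], ⟨v, .inr rfl⟩, by simp [emb, igen], by simp⟩

theorem IsRedex.countP_isRight {s : List (X ⊕ T)} (hs : IsRedex T s) :
    s.countP (·.isRight) = 1 := by
  obtain ⟨v, rfl | rfl⟩ := hs <;> simp [List.countP_cons, Function.comp_def]

theorem Step.countP_isRight {u u' : List (X ⊕ T)} (h : Step T u u') :
    u.countP (·.isRight) = u'.countP (·.isRight) + 1 := by
  obtain ⟨l, s, r, hs, rfl, rfl⟩ := h
  simp only [List.countP_append, hs.countP_isRight]
  omega

theorem IsRedex.of_reflTransGen_nil {u : List (X ⊕ T)} (h : ReflTransGen (Step T) u [])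
    (hu : u.countP (·.isRight) = 1) : IsRedex T u := by
  rcases h.cases_head with rfl | ⟨e, hue, he⟩
  · simp at hu
  have he₀ : e.countP (·.isRight) = 0 := by
    have := hue.countP_isRight
    omega
  obtain rfl : e = [] := he.cases_head.resolve_right fun ⟨f, hef, _⟩ => by
    have := hef.countP_isRight
    omega
  obtain ⟨l, s, r, hs, rfl, hlr⟩ := hue
  obtain ⟨rfl, rfl⟩ := List.append_eq_nil_iff.mp hlr.symm
  simpa using hs

theorem natHom_mul_invElt_mul_natHom_ne_one (hT : OverlapFree T) (v : T) {p q : FreeMonoid X}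
    (hp : p ≠ 1) (hq : q ≠ 1) : natHom T p * invElt T v * natHom T q ≠ 1 := by
  intro h
  have hcon : invCon T (emb T p * igen T v * emb T q) 1 := by
    refine (Con.eq _).mp (?_ : (invCon T).mk' _ = (invCon T).mk' 1)
    rw [map_mul, map_mul, map_one]
    exact h
  obtain ⟨d, hd, hd₁⟩ := join_of_invCon hT hcon
  obtain rfl : [] = d := hd₁.cases_head.resolve_right fun ⟨e, he, _⟩ => by
    have := he.countP_isRight
    simp at this
  have hword : (emb T p * igen T v * emb T q).toList =
      p.toList.map Sum.inl ++ Sum.inr v :: q.toList.map Sum.inl := by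
    simp [emb, igen]
  rw [hword] at hd
  have hred := IsRedex.of_reflTransGen_nil hd (by simp [List.countP_cons, Function.comp_def])
  rcases hred.split_at_inr (z := v) rfl with ⟨-, h⟩ | ⟨h, -⟩
  · exact hq (FreeMonoid.toList.injective (by simpa using h))
  · exact hp (FreeMonoid.toList.injective (by simpa using h))

theorem natHom_mul_invElt (v : T) : natHom T v * invElt T v = 1 := by
  show (invCon T).mk' (emb T v) * (invCon T).mk' (igen T v) = 1
  rw [← map_mul, ← map_one (invCon T).mk']
  exact (Con.eq _).mpr (ConGen.Rel.of _ _ (InvRel.mul_inv v))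

theorem stmt13_general (X : Type*) (T : Set (FreeMonoid X))
    (hT : OverlapFree T)
    (w : FreeMonoid X) (hw : w ∈ T) (w₁ w₂ : FreeMonoid X)
    (hw1 : w₁ ≠ 1) (hw2 : w₂ ≠ 1) (hfac : w = w₁ * w₂)
    (x y : AdjInv T) (hx : x = natHom T w₁)
    (hy : y = natHom T w₂ * invElt T ⟨w, hw⟩) :
    x * y = 1 ∧ y * x ≠ 1 ∧
    (∀ m n m' n' : ℕ, y ^ m * x ^ n = y ^ m' * x ^ n' → m = m' ∧ n = n') ∧
    (y * x) * (y * x) = y * x := by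
  have hxy : x * y = 1 := by
    rw [hx, hy, ← mul_assoc, ← map_mul, ← hfac]
    exact natHom_mul_invElt ⟨w, hw⟩
  have hyx : y * x ≠ 1 := by
    rw [hx, hy]
    exact natHom_mul_invElt_mul_natHom_ne_one hT ⟨w, hw⟩ hw2 hw1
  refine ⟨hxy, hyx, fun m n m' n' h => ?_, ?_⟩
  · exact Prod.mk.inj (injective_pow_mul_pow_of_mul_eq_one hxy hyx h)
  · rw [mul_assoc, ← mul_assoc x, hxy, one_mul]

/-- if some `w ∈ T` factors as `w₁ * w₂` with `w₁, w₂ ≠ 1`, then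
`x = w₁` and `y = w₂ ⬝ i(w)` generate a bicyclic submonoid of `⟨X : i(T)⟩`:
`x*y = 1`, `y*x ≠ 1`, the elements `y^m * x^n` are pairwise distinct, and `y*x` is a
nonidentity idempotent. -/
theorem stmt13 (X : Type*) (T : Set (FreeMonoid X))
    (h1 : (1 : FreeMonoid X) ∉ T) (hT : OverlapFree T)
    (w : FreeMonoid X) (hw : w ∈ T) (w₁ w₂ : FreeMonoid X)
    (hw1 : w₁ ≠ 1) (hw2 : w₂ ≠ 1) (hfac : w = w₁ * w₂)
    (x y : AdjInv T) (hx : x = natHom T w₁)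
    (hy : y = natHom T w₂ * invElt T ⟨w, hw⟩) :
    x * y = 1 ∧ y * x ≠ 1 ∧
    (∀ m n m' n' : ℕ, y ^ m * x ^ n = y ^ m' * x ^ n' → m = m' ∧ n = n') ∧
    (y * x) * (y * x) = y * x :=
  stmt13_general X T hT w hw w₁ w₂ hw1 hw2 hfac x y hx hy

end AdjoinInverses
end

section
/- Let X be a set and S a finite subset of the free monoid ⟨X⟩. Then there exists an element w ∈ ⟨X⟩ such that the singleton {w} is inverse-equivalent to S. In particular, if S = {w₁, …, wₙ} with n > 1, one may take w = w₁⋯wₙ₋₁·wₙ·wₙ₋₁⋯w₁. -/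
namespace AdjoinInverses

variable {X : Type*}

/-! A palindrome `a * m * a` is a unit of a monoid exactly when `a` and `m` are: a two-sided
inverse `u` of `a * m * a` yields the right inverse `m * a * u` and the left inverse `u * a * m`
of `a`. Peeling off one letter at a time, the palindromic product `w₁⋯wₙ₋₁ ⬝ wₙ ⬝ wₙ₋₁⋯w₁` is
therefore a unit exactly when every `wᵢ` is. Applying this to the images of the `wᵢ` in
`⟨X : i({w})⟩` and in `⟨X : i(S)⟩` gives the two halves of inverse-equivalence. -/

section Monoid

variable {M : Type*} [Monoid M]

theorem isUnit_mul_mul_self_iff {a m : M} :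
    IsUnit (a * m * a) ↔ IsUnit a ∧ IsUnit m := by
  refine ⟨fun h => ?_, fun ⟨ha, hm⟩ => (ha.mul hm).mul ha⟩
  obtain ⟨u, hu⟩ := id h
  have ha : IsUnit a := isUnit_iff_exists_and_exists.2
    ⟨⟨m * a * ↑u⁻¹, by rw [← mul_assoc, ← mul_assoc, ← hu, Units.mul_inv]⟩,
     ⟨↑u⁻¹ * a * m, by rw [mul_assoc, mul_assoc, ← mul_assoc a, ← hu, Units.inv_mul]⟩⟩
  refine ⟨ha, ?_⟩
  rwa [← ha.unit_spec, Units.isUnit_mul_units, Units.isUnit_units_mul] at h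

theorem isUnit_prod_mul_mul_prod_reverse_iff (l : List M) (m : M) :
    IsUnit (l.prod * m * l.reverse.prod) ↔ (∀ x ∈ l, IsUnit x) ∧ IsUnit m := by
  induction l with
  | nil => simp
  | cons x l ih =>
    have hpal : (x :: l).prod * m * (x :: l).reverse.prod
        = x * (l.prod * m * l.reverse.prod) * x := by
      simp only [List.prod_cons, List.reverse_cons, List.prod_append,
        List.prod_nil, mul_one, mul_assoc]
    rw [hpal, isUnit_mul_mul_self_iff, ih, List.forall_mem_cons, and_assoc]

def palindromeProd (l : List M) : M :=
  l.dropLast.prod * l.getLastD 1 * l.dropLast.reverse.prod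

theorem isUnit_palindromeProd_iff (l : List M) :
    IsUnit (palindromeProd l) ↔ ∀ x ∈ l, IsUnit x := by
  rcases l.eq_nil_or_concat' with rfl | ⟨l, y, rfl⟩
  · simp [palindromeProd]
  · simp [palindromeProd, isUnit_prod_mul_mul_prod_reverse_iff, or_imp, forall_and]

theorem map_palindromeProd {N : Type*} [Monoid N] (f : M →* N) (l : List M) :
    f (palindromeProd l) = palindromeProd (l.map f) := by
  rcases l.eq_nil_or_concat' with rfl | ⟨l, y, rfl⟩
  · simp [palindromeProd]
  · simp [palindromeProd, map_list_prod]

end Monoid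

theorem isUnit_natHom_of_mem {S : Set (FreeMonoid X)} {w : FreeMonoid X} (hw : w ∈ S) :
    IsUnit (natHom S w) :=
  isUnit_iff_exists.2 ⟨invElt S ⟨w, hw⟩,
    (invCon S).eq.2 (ConGen.Rel.of _ _ (InvRel.mul_inv ⟨w, hw⟩)),
    (invCon S).eq.2 (ConGen.Rel.of _ _ (InvRel.inv_mul ⟨w, hw⟩))⟩

theorem invEquiv_palindromeProd (l : List (FreeMonoid X)) :
    InvEquiv {palindromeProd l} {x | x ∈ l} := by
  have hunit : ∀ S : Set (FreeMonoid X), IsUnit (natHom S (palindromeProd l)) ↔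
      ∀ x ∈ l, IsUnit (natHom S x) := fun S => by
    rw [map_palindromeProd, isUnit_palindromeProd_iff, List.forall_mem_map]
  refine ⟨fun x hx => ?_, fun w hw => ?_⟩
  · exact (hunit _).1 (isUnit_natHom_of_mem (Set.mem_singleton _)) x hx
  · rw [Set.mem_singleton_iff.1 hw]
    exact (hunit _).2 fun x hx => isUnit_natHom_of_mem hx

/-- any finite `S` is inverse-equivalent to a singleton `{w}`; in
particular, if `S = {w₁, …, wₙ}` with `n > 1`, one may take
`w = w₁⋯wₙ₋₁ ⬝ wₙ ⬝ wₙ₋₁⋯w₁`. -/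
theorem stmt14 (X : Type*) (S : Set (FreeMonoid X)) (hS : S.Finite) :
    (∃ w : FreeMonoid X, InvEquiv {w} S) ∧
    ∀ l : List (FreeMonoid X), 1 < l.length → S = {x | x ∈ l} →
      InvEquiv {l.dropLast.prod * l.getLastD 1 * l.dropLast.reverse.prod} S := by
  refine ⟨?_, fun l _ hSl => hSl ▸ invEquiv_palindromeProd l⟩
  obtain ⟨s, rfl⟩ := hS.exists_finset_coe
  refine ⟨palindromeProd s.toList, ?_⟩
  simpa using invEquiv_palindromeProd s.toList

end AdjoinInverses
end

section
/- Let X be a set, w an element of the free monoid ⟨X⟩, and z a symbol not in X. Then the monoid presented by the generating set X ∪ {z} subject to the single relation w·z·w = 1 is isomorphic to ⟨X : i(w)⟩, via an isomorphism respecting the images of the generators from X; under this isomorphism z corresponds to i(w)·i(w). -/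
/-! In any monoid, `w z w = 1` makes `w` invertible, with right inverse `z w` and left inverse
`w z`; conversely, if `w` has a two-sided inverse `i` then `w (i i) w = 1`. Hence `z ↦ i i` and
`i ↦ z w` extend to homomorphisms between the two presented monoids, and these are mutually
inverse because `(z w) (z w) = z (w z w) = z` and `(i i) w = i`. -/
namespace AdjoinInverses

variable {X : Type*}

/-- The congruence on the free monoid on `X ⊕ Unit` (with the extra generator `z`)
generated by the single relation `w ⬝ z ⬝ w = 1`. -/
def spCon (w : FreeMonoid X) : Con (FreeMonoid (X ⊕ Unit)) :=
  conGen (fun u v : FreeMonoid (X ⊕ Unit) =>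
    u = (FreeMonoid.map Sum.inl w) * FreeMonoid.of (Sum.inr ()) *
        (FreeMonoid.map Sum.inl w) ∧ v = 1)

/-- The special monoid `⟨X ∪ {z} | w z w = 1⟩`. -/
def SpecialMonoid (w : FreeMonoid X) : Type _ := (spCon w).Quotient

instance (w : FreeMonoid X) : Monoid (SpecialMonoid w) := Con.monoid _

theorem isUnit_of_mul_mul_eq_one {M : Type*} [Monoid M] {a b : M} (h : a * b * a = 1) :
    IsUnit a :=
  isUnit_iff_exists_and_exists.2 ⟨⟨b * a, by rw [← mul_assoc, h]⟩, ⟨a * b, h⟩⟩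

theorem lift_sumElim_map_inl {Y M : Type*} [Monoid M] (f : FreeMonoid X →* M) (g : Y → M)
    (u : FreeMonoid X) :
    FreeMonoid.lift (Sum.elim (fun x => f (FreeMonoid.of x)) g) (FreeMonoid.map Sum.inl u) =
      f u :=
  DFunLike.congr_fun (FreeMonoid.hom_eq (f := (FreeMonoid.lift _).comp (FreeMonoid.map Sum.inl))
    (g := f) fun _ => rfl) u

section UniversalProperties

variable {M : Type*} [Monoid M]

namespace SpecialMonoid

variable {w : FreeMonoid X}

def z (w : FreeMonoid X) : SpecialMonoid w := (spCon w).mk' (FreeMonoid.of (Sum.inr ()))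

def ofFree (w : FreeMonoid X) : FreeMonoid X →* SpecialMonoid w :=
  (spCon w).mk'.comp (FreeMonoid.map Sum.inl)

theorem ofFree_mul_z_mul_ofFree : ofFree w w * z w * ofFree w w = 1 :=
  (Con.eq _).2 (ConGen.Rel.of _ _ ⟨rfl, rfl⟩)

def lift (f : FreeMonoid X →* M) (m : M) (h : f w * m * f w = 1) : SpecialMonoid w →* M :=
  (spCon w).lift (FreeMonoid.lift (Sum.elim (fun x => f (FreeMonoid.of x)) fun _ => m)) <|
    Con.conGen_le.2 <| by
      rintro _ _ ⟨rfl, rfl⟩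
      simpa only [Con.ker_rel, map_mul, map_one, lift_sumElim_map_inl, FreeMonoid.lift_eval_of,
        Sum.elim_inr] using h

@[simp]
theorem lift_ofFree (f : FreeMonoid X →* M) (m : M) (h : f w * m * f w = 1) (u : FreeMonoid X) :
    lift f m h (ofFree w u) = f u :=
  lift_sumElim_map_inl f _ u

@[simp]
theorem lift_z (f : FreeMonoid X →* M) (m : M) (h : f w * m * f w = 1) : lift f m h (z w) = m :=
  rfl

@[ext]
theorem hom_ext {f g : SpecialMonoid w →* M}
    (hX : ∀ x, f (ofFree w (FreeMonoid.of x)) = g (ofFree w (FreeMonoid.of x)))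
    (hz : f (z w) = g (z w)) : f = g :=
  Con.hom_ext <| FreeMonoid.hom_eq <| by rintro (x | ⟨⟩); exacts [hX x, hz]

end SpecialMonoid

namespace AdjInv

variable {S : Set (FreeMonoid X)}

theorem natHom_mul_invElt {w : FreeMonoid X} (hw : w ∈ S) : natHom S w * invElt S ⟨w, hw⟩ = 1 :=
  (Con.eq _).2 (ConGen.Rel.of _ _ (InvRel.mul_inv ⟨w, hw⟩))

theorem invElt_mul_natHom {w : FreeMonoid X} (hw : w ∈ S) : invElt S ⟨w, hw⟩ * natHom S w = 1 :=
  (Con.eq _).2 (ConGen.Rel.of _ _ (InvRel.inv_mul ⟨w, hw⟩))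

noncomputable def lift (f : FreeMonoid X →* M) (hf : ∀ s ∈ S, IsUnit (f s)) : AdjInv S →* M :=
  (invCon S).lift
      (FreeMonoid.lift (Sum.elim (fun x => f (FreeMonoid.of x)) fun s => ↑(hf s s.2).unit⁻¹)) <|
    Con.conGen_le.2 <| by
      rintro _ _ (⟨s⟩ | ⟨s⟩) <;>
      simp only [Con.ker_rel, map_mul, map_one, emb, igen, lift_sumElim_map_inl,
        FreeMonoid.lift_eval_of, Sum.elim_inr, IsUnit.mul_val_inv, IsUnit.val_inv_mul]

@[simp]
theorem lift_natHom (f : FreeMonoid X →* M) (hf : ∀ s ∈ S, IsUnit (f s)) (u : FreeMonoid X) :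
    lift f hf (natHom S u) = f u :=
  lift_sumElim_map_inl f _ u

theorem lift_invElt (f : FreeMonoid X →* M) (hf : ∀ s ∈ S, IsUnit (f s)) (s : S) :
    lift f hf (invElt S s) = ↑(hf s s.2).unit⁻¹ :=
  rfl

@[ext]
theorem hom_ext {f g : AdjInv S →* M}
    (hX : ∀ x, f (natHom S (FreeMonoid.of x)) = g (natHom S (FreeMonoid.of x)))
    (hS : ∀ s, f (invElt S s) = g (invElt S s)) : f = g :=
  Con.hom_ext <| FreeMonoid.hom_eq <| by rintro (x | s); exacts [hX x, hS s]

end AdjInv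

end UniversalProperties

section SingleInverse

variable (w : FreeMonoid X)

open SpecialMonoid

def SpecialMonoid.toAdjInv : SpecialMonoid w →* AdjInv {w} :=
  lift (natHom {w}) (invElt {w} ⟨w, rfl⟩ * invElt {w} ⟨w, rfl⟩) <| by
    rw [← mul_assoc, AdjInv.natHom_mul_invElt (S := {w}) rfl, one_mul,
      AdjInv.invElt_mul_natHom (S := {w}) rfl]

noncomputable def AdjInv.toSpecialMonoid : AdjInv {w} →* SpecialMonoid w :=
  AdjInv.lift (ofFree w) <| by
    rintro s rfl
    exact isUnit_of_mul_mul_eq_one ofFree_mul_z_mul_ofFree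

theorem AdjInv.toSpecialMonoid_invElt (s : ({w} : Set (FreeMonoid X))) :
    AdjInv.toSpecialMonoid w (invElt {w} s) = z w * ofFree w w := by
  obtain ⟨_, rfl⟩ := s
  rw [AdjInv.toSpecialMonoid, AdjInv.lift_invElt]
  exact Units.inv_eq_of_mul_eq_one_right (by rw [IsUnit.unit_spec, ← mul_assoc,
    ofFree_mul_z_mul_ofFree])

theorem AdjInv.toSpecialMonoid_comp_toAdjInv :
    (AdjInv.toSpecialMonoid w).comp (toAdjInv w) = MonoidHom.id _ := by
  ext
  · simp [toAdjInv, AdjInv.toSpecialMonoid]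
  · have hwzw := ofFree_mul_z_mul_ofFree (w := w)
    simp only [mul_assoc] at hwzw
    simp [toAdjInv, AdjInv.toSpecialMonoid_invElt, mul_assoc, hwzw]

theorem SpecialMonoid.toAdjInv_comp_toSpecialMonoid :
    (toAdjInv w).comp (AdjInv.toSpecialMonoid w) = MonoidHom.id _ := by
  refine AdjInv.hom_ext (fun _ => by simp [toAdjInv, AdjInv.toSpecialMonoid]) ?_
  rintro ⟨_, rfl⟩
  simp [toAdjInv, AdjInv.toSpecialMonoid_invElt, mul_assoc,
    AdjInv.invElt_mul_natHom (S := {_}) rfl]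

noncomputable def SpecialMonoid.equivAdjInv : SpecialMonoid w ≃* AdjInv {w} :=
  (SpecialMonoid.toAdjInv w).toMulEquiv (AdjInv.toSpecialMonoid w)
    (AdjInv.toSpecialMonoid_comp_toAdjInv w) (SpecialMonoid.toAdjInv_comp_toSpecialMonoid w)

end SingleInverse

/-- `⟨X ∪ {z} | w z w = 1⟩ ≅ ⟨X : i(w)⟩`, via an isomorphism respecting
the generators from `X` and sending `z` to `i(w) ⬝ i(w)`. -/
theorem stmt19 (X : Type*) (w : FreeMonoid X) :
    ∃ φ : SpecialMonoid w ≃* AdjInv ({w} : Set (FreeMonoid X)),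
      (∀ x : X, φ ((spCon w).mk' (FreeMonoid.of (Sum.inl x))) =
        natHom {w} (FreeMonoid.of x)) ∧
      φ ((spCon w).mk' (FreeMonoid.of (Sum.inr ()))) =
        invElt {w} ⟨w, rfl⟩ * invElt {w} ⟨w, rfl⟩ :=
  ⟨SpecialMonoid.equivAdjInv w, fun _ => rfl, rfl⟩

end AdjoinInverses
end
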